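/- For a general source X, the infimum of 0-achievable overflow thresholds satisfies R(0|X) = (1/α_c)·H̄(X), where H̄(X) = p-limsup_{n→∞} (1/n) log_K (1/P_{X^n}(X^n)) is the spectral sup-entropy rate. -/

import Mathlib

/-- Additive cost of a string over the code alphabet. -/
noncomputable def strCost {U : Type*} (c : U → ℝ) (s : List U) : ℝ := (s.map c).sum

/-- Probability of a set under a (real-valued) distribution. -/
noncomputable def prob {X : Type*} (P : X → ℝ) (S : Set X) : ℝ := ∑' x, S.indicator P x

/-!
Weigh the code symbols by `q u = K ^ (-α c u)`, so that `∑ q = 1` and a string of cost `c(s)` has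
weight `K ^ (-α c(s))`. Iterating the partition of `[0, 1)` into pieces of lengths `q u`, each
string codes a subinterval of `[0, 1)` whose length is its weight; extending a string shrinks its
interval, and strings neither of which is a prefix of the other code disjoint intervals.

Converse: comparing Lebesgue measures gives Kraft's inequality `∑ₓ K ^ (-α c(φ x)) ≤ 1` for a
prefix code, so the outcomes of self-information above `nβ` and cost at most `nR` have total
probability at most `K ^ (-n(β - αR))`.

Direct: lay out slots of length `P x` (slightly enlarged to make them positive) side by side in
`[0, 1)` and give `x` a string whose interval sits around the midpoint of its slot with length
comparable to `P x`. This is a prefix code with `α c(φ x) ≤ C + log_K (1 / P x)`, `C` independent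
of `n`, so overflow at rate `R` eventually forces self-information rate above any `β < αR`.
-/

open Set Function Filter Topology Real

section SymbolIntervals

variable {U : Type*} [DecidableEq U] (q : U → ℝ)

/-- Where the piece of `u` starts when `[0, ∑_{a ∈ L} q a)` is cut into consecutive pieces of
lengths `q a`, in the order of `L`. -/
def symOffset : List U → U → ℝ
  | [], _ => 0
  | a :: L, u => if u = a then 0 else q a + symOffset L u

variable {q}

lemma symOffset_nonneg (hq : ∀ u, 0 ≤ q u) (L : List U) (u : U) : 0 ≤ symOffset q L u := by
  induction L with
  | nil => rfl
  | cons a L ih => unfold symOffset; split_ifs <;> linarith [hq a]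

lemma symOffset_add_le_sum (hq : ∀ u, 0 ≤ q u) {L : List U} {u : U} (hu : u ∈ L) :
    symOffset q L u + q u ≤ (L.map q).sum := by
  induction L with
  | nil => simp at hu
  | cons a L ih =>
    have hL := List.sum_nonneg (l := L.map q) (by simpa using fun v _ => hq v)
    unfold symOffset
    split_ifs with h
    · simp [h, hL]
    · simp only [List.map_cons, List.sum_cons]
      linarith [ih ((List.mem_cons.1 hu).resolve_left h)]

lemma disjoint_symOffset_Ico (hq : ∀ u, 0 ≤ q u) {L : List U} {u v : U} (hu : u ∈ L)
    (hv : v ∈ L) (huv : u ≠ v) :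
    Disjoint (Ico (symOffset q L u) (symOffset q L u + q u))
      (Ico (symOffset q L v) (symOffset q L v + q v)) := by
  induction L with
  | nil => simp at hu
  | cons a L ih =>
    simp only [List.mem_cons] at hu hv
    unfold symOffset
    by_cases hua : u = a
    · subst hua
      rw [if_neg huv.symm, if_pos rfl]
      exact Ico_disjoint_Ico.2 (by simp [symOffset_nonneg hq])
    by_cases hva : v = a
    · subst hva
      rw [if_neg hua, if_pos rfl]
      exact Ico_disjoint_Ico.2 (by simp [symOffset_nonneg hq])
    rw [if_neg hua, if_neg hva, add_assoc, add_assoc]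
    simpa only [image_const_add_Ico] using
      (disjoint_image_iff (add_right_injective (q a))).2
        (ih (hu.resolve_left hua) (hv.resolve_left hva))

lemma exists_mem_symOffset_Ico {L : List U} (hL : L.Nodup) {r : ℝ} (hr : 0 ≤ r)
    (hrL : r < (L.map q).sum) : ∃ u ∈ L, r ∈ Ico (symOffset q L u) (symOffset q L u + q u) := by
  induction L generalizing r with
  | nil => simp only [List.map_nil, List.sum_nil] at hrL; linarith
  | cons a L ih =>
    rw [List.nodup_cons] at hL
    by_cases hra : r < q a
    · exact ⟨a, by simp, by simp [symOffset, hr, hra]⟩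
    · obtain ⟨u, hu, hru⟩ := ih hL.2 (r := r - q a) (by linarith)
        (by simp only [List.map_cons, List.sum_cons] at hrL; linarith)
      have hua : u ≠ a := fun h => hL.1 (h ▸ hu)
      refine ⟨u, by simp [hu], ?_⟩
      simp only [symOffset, if_neg hua, mem_Ico] at hru ⊢
      constructor <;> linarith [hru.1, hru.2]

end SymbolIntervals

section StringWeight

variable {U : Type*} {q : U → ℝ}

variable (q) in
def strWeight (s : List U) : ℝ := (s.map q).prod

@[simp] lemma strWeight_nil : strWeight q [] = 1 := rfl

@[simp] lemma strWeight_cons (u : U) (s : List U) :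
    strWeight q (u :: s) = q u * strWeight q s := rfl

lemma strWeight_pos (hq : ∀ u, 0 < q u) (s : List U) : 0 < strWeight q s :=
  List.prod_pos (by simpa using fun u _ => hq u)

end StringWeight

section StringIntervals

variable {U : Type*} [Fintype U] [DecidableEq U] (q : U → ℝ)

/-- The string `s` codes `strInterval q s = [strBase q s, strBase q s + strWeight q s)`: the empty
string codes `[0, 1)`, and `u :: s` the image of the interval of `s` under the increasing affine map
of `[0, 1)` onto the piece of `u` in the partition by `symOffset q univ.toList`. -/
noncomputable def strBase : List U → ℝ
  | [] => 0
  | u :: s => symOffset q Finset.univ.toList u + q u * strBase s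

def strInterval (s : List U) : Set ℝ := Ico (strBase q s) (strBase q s + strWeight q s)

variable {q}

@[simp] lemma strInterval_nil : strInterval q [] = Ico 0 1 := by
  simp [strInterval, strBase]

lemma strInterval_cons {u : U} (hu : 0 < q u) (s : List U) :
    strInterval q (u :: s) =
      (q u * · + symOffset q Finset.univ.toList u) '' strInterval q s := by
  rw [strInterval, strInterval, image_affine_Ico hu]
  congr 1 <;> simp only [strBase, strWeight_cons] <;> ring

lemma strInterval_singleton {u : U} (hu : 0 < q u) :
    strInterval q [u] =
      Ico (symOffset q Finset.univ.toList u) (symOffset q Finset.univ.toList u + q u) := by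
  rw [strInterval_cons hu, strInterval_nil, image_affine_Ico hu]
  simp [add_comm]

lemma strInterval_subset_Ico (hq : ∀ u, 0 < q u) (hsum : ∑ u, q u = 1) (s : List U) :
    strInterval q s ⊆ Ico 0 1 := by
  induction s with
  | nil => simp
  | cons u s ih =>
    have hle := symOffset_add_le_sum (fun v => (hq v).le) (Finset.mem_toList.2 (Finset.mem_univ u))
    rw [Finset.sum_map_toList, hsum] at hle
    rw [strInterval_cons (hq u)]
    refine (image_mono ih).trans ?_
    rw [image_affine_Ico (hq u), mul_zero, zero_add, mul_one, add_comm]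
    exact Ico_subset_Ico (symOffset_nonneg (fun v => (hq v).le) _ _) hle

lemma strInterval_subset_of_prefix (hq : ∀ u, 0 < q u) (hsum : ∑ u, q u = 1) {s t : List U}
    (hst : s <+: t) : strInterval q t ⊆ strInterval q s := by
  induction s generalizing t with
  | nil => simpa using strInterval_subset_Ico hq hsum t
  | cons u s ih =>
    cases t with
    | nil => simp at hst
    | cons v t =>
      obtain ⟨rfl, hst'⟩ := List.cons_prefix_cons.1 hst
      rw [strInterval_cons (hq u), strInterval_cons (hq u)]
      exact image_mono (ih hst')

lemma disjoint_strInterval (hq : ∀ u, 0 < q u) (hsum : ∑ u, q u = 1) {s t : List U}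
    (hst : ¬ s <+: t) (hts : ¬ t <+: s) : Disjoint (strInterval q s) (strInterval q t) := by
  induction s generalizing t with
  | nil => exact absurd List.nil_prefix hst
  | cons u s ih =>
    cases t with
    | nil => exact absurd List.nil_prefix hts
    | cons v t =>
      by_cases huv : u = v
      · subst huv
        simp only [List.cons_prefix_cons, true_and] at hst hts
        rw [strInterval_cons (hq u), strInterval_cons (hq u)]
        exact (disjoint_image_iff fun a b h => by simpa [(hq u).ne'] using h).2 (ih hst hts)
      · refine Disjoint.mono (strInterval_subset_of_prefix hq hsum (s := [u]) (by simp))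
          (strInterval_subset_of_prefix hq hsum (s := [v]) (by simp)) ?_
        rw [strInterval_singleton (hq u), strInterval_singleton (hq v)]
        exact disjoint_symOffset_Ico (fun w => (hq w).le) (by simp) (by simp) huv

lemma exists_mem_strInterval_singleton (hq : ∀ u, 0 < q u) (hsum : ∑ u, q u = 1) {r : ℝ}
    (hr : r ∈ Ico (0 : ℝ) 1) : ∃ u, r ∈ strInterval q [u] := by
  obtain ⟨u, -, hu⟩ := exists_mem_symOffset_Ico (q := q) (Finset.nodup_toList Finset.univ) hr.1
    (by rw [Finset.sum_map_toList, hsum]; exact hr.2)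
  exact ⟨u, by rwa [strInterval_singleton (hq u)]⟩

end StringIntervals

section PrefixCodes

variable {U E : Type*}

def IsPrefixCode (φ : E → List U) : Prop := ∀ x y, φ x <+: φ y → x = y

lemma IsPrefixCode.injective {φ : E → List U} (hφ : IsPrefixCode φ) : Function.Injective φ :=
  fun x y hxy => hφ x y (hxy ▸ List.prefix_refl _)

variable [Fintype U] [DecidableEq U] {q : U → ℝ}

lemma IsPrefixCode.pairwise_disjoint_strInterval (hq : ∀ u, 0 < q u) (hsum : ∑ u, q u = 1)
    {φ : E → List U} (hφ : IsPrefixCode φ) :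
    Pairwise (Disjoint on fun x => strInterval q (φ x)) := fun x y hxy =>
  disjoint_strInterval hq hsum (fun h => hxy (hφ x y h)) (fun h => hxy (hφ y x h).symm)

open MeasureTheory in
lemma IsPrefixCode.sum_strWeight_le_one (hq : ∀ u, 0 < q u) (hsum : ∑ u, q u = 1)
    {φ : E → List U} (hφ : IsPrefixCode φ) (S : Finset E) :
    ∑ x ∈ S, strWeight q (φ x) ≤ 1 := by
  have hvol : volume (⋃ x ∈ S, strInterval q (φ x)) =
      ∑ x ∈ S, ENNReal.ofReal (strWeight q (φ x)) := by
    rw [measure_biUnion_finset (f := fun x => strInterval q (φ x))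
      ((hφ.pairwise_disjoint_strInterval hq hsum).set_pairwise _) fun _ _ => measurableSet_Ico]
    simp [strInterval, Real.volume_Ico]
  rw [← ENNReal.ofReal_le_ofReal_iff zero_le_one,
    ENNReal.ofReal_sum_of_nonneg fun x _ => (strWeight_pos hq _).le, ← hvol,
    ← sub_zero (1 : ℝ), ← Real.volume_Ico]
  exact measure_mono (iUnion₂_subset fun x _ => strInterval_subset_Ico hq hsum _)

lemma IsPrefixCode.summable_strWeight (hq : ∀ u, 0 < q u) (hsum : ∑ u, q u = 1)
    {φ : E → List U} (hφ : IsPrefixCode φ) : Summable fun x => strWeight q (φ x) :=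
  summable_of_sum_le (fun _ => (strWeight_pos hq _).le) (hφ.sum_strWeight_le_one hq hsum)

lemma IsPrefixCode.tsum_strWeight_le_one (hq : ∀ u, 0 < q u) (hsum : ∑ u, q u = 1)
    {φ : E → List U} (hφ : IsPrefixCode φ) : ∑' x, strWeight q (φ x) ≤ 1 :=
  (hφ.summable_strWeight hq hsum).tsum_le_of_sum_le (hφ.sum_strWeight_le_one hq hsum)

end PrefixCodes

section CodeConstruction

variable {U E : Type*} [Fintype U] [DecidableEq U] {q : U → ℝ}

lemma exists_mem_strInterval_of_pow_le (hq : ∀ u, 0 < q u) (hsum : ∑ u, q u = 1) {m θ : ℝ}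
    (hm0 : 0 ≤ m) (hm : ∀ u, m ≤ q u) (hθ : ∀ u, q u ≤ θ) (hθ1 : θ < 1) (n : ℕ) :
    ∀ r ∈ Ico (0 : ℝ) 1, ∀ w ≤ 1, θ ^ n ≤ w →
      ∃ s ≠ [], r ∈ strInterval q s ∧ m * w ≤ strWeight q s ∧ strWeight q s ≤ w := by
  have single {r w : ℝ} {u : U} (hw1 : w ≤ 1) (hu : r ∈ strInterval q [u]) (hquw : q u ≤ w) :
      ∃ s ≠ [], r ∈ strInterval q s ∧ m * w ≤ strWeight q s ∧ strWeight q s ≤ w :=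
    ⟨[u], List.cons_ne_nil _ _, hu,
      by rw [strWeight_cons, strWeight_nil, mul_one]; nlinarith [hm u], by simpa using hquw⟩
  induction n with
  | zero =>
    intro r hr w hw1 hθw
    obtain ⟨u, hu⟩ := exists_mem_strInterval_singleton hq hsum hr
    exact single hw1 hu (by linarith [hθ u, pow_zero θ])
  | succ n ih =>
    intro r hr w hw1 hθw
    obtain ⟨u, hu⟩ := exists_mem_strInterval_singleton hq hsum hr
    by_cases hquw : q u ≤ w
    · exact single hw1 hu hquw
    have hθn : θ ^ n ≤ w / q u := by
      rw [le_div_iff₀ (hq u)]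
      calc θ ^ n * q u ≤ θ ^ n * θ :=
            mul_le_mul_of_nonneg_left (hθ u) (pow_nonneg ((hq u).le.trans (hθ u)) n)
        _ ≤ w := pow_succ θ n ▸ hθw
    rw [strInterval_cons (hq u), strInterval_nil] at hu
    obtain ⟨r', hr', rfl⟩ := hu
    obtain ⟨s, -, hr's, hms, hsw⟩ :=
      ih r' hr' (w / q u) ((div_le_one (hq u)).2 (not_le.1 hquw).le) hθn
    refine ⟨u :: s, List.cons_ne_nil _ _, ?_, ?_, ?_⟩
    · rw [strInterval_cons (hq u)]
      exact mem_image_of_mem _ hr's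
    · calc m * w = q u * (m * (w / q u)) := by field_simp [(hq u).ne']
        _ ≤ strWeight q (u :: s) := mul_le_mul_of_nonneg_left hms (hq u).le
    · rwa [strWeight_cons, ← le_div_iff₀' (hq u)]

lemma exists_pairwise_disjoint_Ico [Countable E] {p : E → ℝ} (hp : ∀ x, 0 ≤ p x) {t : ℝ}
    (hpt : HasSum p t) (ht : t ≤ 1) :
    ∃ a : E → ℝ, (∀ x, 0 ≤ a x ∧ a x + p x ≤ 1) ∧
      Pairwise (Disjoint on fun x => Ico (a x) (a x + p x)) := by
  obtain ⟨ι, hι⟩ := Countable.exists_injective_nat E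
  set p' : ℕ → ℝ := extend ι p 0
  have hp' : ∀ k, 0 ≤ p' k := fun k => by
    simp only [p', extend]; split_ifs <;> simp [hp]
  set A : ℕ → ℝ := fun k => ∑ j ∈ Finset.range k, p' j
  have hA : Monotone A := monotone_nat_of_le_succ fun k => by
    simp only [A, Finset.sum_range_succ]; linarith [hp' k]
  have hAp : ∀ x, A (ι x) + p x = A (ι x + 1) := fun x => by
    simp only [A, Finset.sum_range_succ, p', hι.extend_apply]
  refine ⟨fun x => A (ι x), fun x => ?_, fun x y hxy => ?_⟩
  · rw [hAp]
    exact ⟨Finset.sum_nonneg fun j _ => hp' j,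
      (sum_le_hasSum _ (fun j _ => hp' j) ((hasSum_extend_zero hι).2 hpt)).trans ht⟩
  · simpa only [onFun, hAp, Order.succ_eq_add_one] using
      hA.pairwise_disjoint_on_Ico_succ (hι.ne hxy)

lemma exists_prefixCode_strWeight_ge_of_pos [Countable E] (hq : ∀ u, 0 < q u)
    (hsum : ∑ u, q u = 1) {m θ : ℝ} (hm0 : 0 ≤ m) (hm : ∀ u, m ≤ q u) (hθ : ∀ u, q u ≤ θ)
    (hθ1 : θ < 1) {p : E → ℝ} (hp : ∀ x, 0 < p x) {t : ℝ} (hpt : HasSum p t) (ht : t ≤ 1) :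
    ∃ φ : E → List U, IsPrefixCode φ ∧ (∀ x, φ x ≠ []) ∧ ∀ x, m * p x / 2 ≤ strWeight q (φ x) := by
  obtain ⟨a, haI, hdisj⟩ := exists_pairwise_disjoint_Ico (fun x => (hp x).le) hpt ht
  have hcode (x : E) : ∃ s ≠ [], strInterval q s ⊆ Ico (a x) (a x + p x) ∧
      m * (p x / 2) ≤ strWeight q s := by
    obtain ⟨n, hn⟩ := exists_pow_lt_of_lt_one (half_pos (hp x)) hθ1
    obtain ⟨hax, hapx⟩ := haI x
    obtain ⟨s, hs, hmem, hms, hsw⟩ := exists_mem_strInterval_of_pow_le hq hsum hm0 hm hθ hθ1 n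
      (a x + p x / 2) ⟨by linarith [hp x], by linarith [hp x]⟩ _ (by linarith [hp x]) hn.le
    refine ⟨s, hs, fun z hz => ?_, hms⟩
    simp only [strInterval, mem_Ico] at hmem hz ⊢
    constructor <;> linarith
  choose φ hφnil hφI hφw using hcode
  refine ⟨φ, fun x y hxy => ?_, hφnil, fun x => by linarith [hφw x]⟩
  -- if `φ x` is a prefix of `φ y`, the interval of `φ y` lies in the slots of both `x` and `y`
  by_contra hne
  have hz : strBase q (φ y) ∈ strInterval q (φ y) :=
    ⟨le_rfl, lt_add_of_pos_right _ (strWeight_pos hq _)⟩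
  exact (hdisj hne).ne_of_mem (hφI x (strInterval_subset_of_prefix hq hsum hxy hz)) (hφI y hz) rfl

lemma exists_prefixCode_strWeight_ge [Countable E] (hq : ∀ u, 0 < q u)
    (hsum : ∑ u, q u = 1) {m θ : ℝ} (hm0 : 0 ≤ m) (hm : ∀ u, m ≤ q u) (hθ : ∀ u, q u ≤ θ)
    (hθ1 : θ < 1) {P : E → ℝ} (hP0 : ∀ x, 0 ≤ P x) (hP1 : HasSum P 1) :
    ∃ φ : E → List U, IsPrefixCode φ ∧ (∀ x, φ x ≠ []) ∧ ∀ x, m * P x / 4 ≤ strWeight q (φ x) := by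
  have := Encodable.ofCountable E
  obtain ⟨δ, hδ0, c, hδ, hc⟩ := posSumOfEncodable one_pos E
  obtain ⟨φ, hφ, hnil, hw⟩ := exists_prefixCode_strWeight_ge_of_pos hq hsum hm0 hm hθ hθ1
    (p := fun x => (P x + δ x) / 2) (fun x => by linarith [hP0 x, hδ0 x])
    ((hP1.add hδ).div_const 2) (by linarith)
  refine ⟨φ, hφ, hnil, fun x => le_trans ?_ (hw x)⟩
  nlinarith [hδ0 x]

end CodeConstruction

section Probability

variable {X : Type*} {P : X → ℝ}

lemma prob_nonneg (hP : ∀ x, 0 ≤ P x) (S : Set X) : 0 ≤ prob P S :=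
  tsum_nonneg fun x => indicator_nonneg (fun y _ => hP y) x

lemma prob_le_tsum (hP : ∀ x, 0 ≤ P x) {g : X → ℝ} (hg : ∀ x, 0 ≤ g x) (hgs : Summable g)
    {S : Set X} (hS : ∀ x ∈ S, P x ≤ g x) : prob P S ≤ ∑' x, g x := by
  have hle : S.indicator P ≤ g := indicator_le' hS fun x _ => hg x
  exact (hgs.of_nonneg_of_le (indicator_nonneg fun y _ => hP y) hle).tsum_le_tsum hle hgs

lemma prob_le_one (hP : ∀ x, 0 ≤ P x) (hP1 : HasSum P 1) (S : Set X) : prob P S ≤ 1 :=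
  hP1.tsum_eq ▸ prob_le_tsum hP hP hP1.summable fun _ _ => le_rfl

lemma prob_le_prob_of_pos (hP : ∀ x, 0 ≤ P x) (hPs : Summable P) {S T : Set X}
    (hST : ∀ x ∈ S, 0 < P x → x ∈ T) : prob P S ≤ prob P T := by
  refine prob_le_tsum hP (indicator_nonneg fun y _ => hP y) (hPs.indicator T) fun x hx => ?_
  rcases (hP x).eq_or_lt with h | h
  · exact h ▸ indicator_nonneg (fun y _ => hP y) x
  · rw [indicator_of_mem (hST x hx h)]

lemma prob_univ (hP1 : HasSum P 1) : prob P univ = 1 := by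
  simp [prob, hP1.tsum_eq]

end Probability

lemma tendsto_zero_of_limsup_nonpos {f : ℕ → ℝ} {C : ℝ} (h0 : ∀ n, 0 ≤ f n) (hC : ∀ n, f n ≤ C)
    (h : limsup f atTop ≤ 0) : Tendsto f atTop (𝓝 0) :=
  tendsto_of_le_liminf_of_limsup_le
    (le_liminf_of_le (isBoundedUnder_of ⟨C, hC⟩).isCoboundedUnder_flip (Eventually.of_forall h0))
    h (isBoundedUnder_of ⟨C, hC⟩) (isBoundedUnder_of ⟨0, h0⟩)

section SelfInformation

variable {K : ℝ}

lemma le_rpow_neg_of_lt_logb_inv (hK : 1 < K) {p a : ℝ} (hp : 0 ≤ p) (h : a < logb K p⁻¹) :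
    p ≤ K ^ (-a) := by
  rcases hp.eq_or_lt with rfl | hp
  · positivity
  rw [lt_logb_iff_rpow_lt hK (inv_pos.2 hp), lt_inv_comm₀ (by positivity) hp] at h
  rw [rpow_neg (by positivity)]
  exact h.le

lemma le_logb_inv_add_logb_inv (hK : 1 < K) {a p y : ℝ} (ha : 0 < a) (hp : 0 < p)
    (h : a * p ≤ K ^ (-y)) : y ≤ logb K a⁻¹ + logb K p⁻¹ := by
  have := logb_le_logb_of_le hK (mul_pos ha hp) h
  rw [logb_rpow (by positivity) hK.ne', logb_mul ha.ne' hp.ne'] at this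
  rw [logb_inv, logb_inv]
  linarith

variable {U : Type*}

lemma strWeight_rpow_eq (hK : 0 < K) (c : U → ℝ) (α : ℝ) (s : List U) :
    strWeight (fun u => K ^ (-(α * c u))) s = K ^ (-(α * strCost c s)) := by
  induction s with
  | nil => simp [strCost]
  | cons u s ih =>
    rw [strWeight_cons, ih, ← rpow_add hK]
    simp [strCost, mul_add, add_comm]

end SelfInformation

section Source

variable {U : Type*} [Fintype U] {K α : ℝ} {c : U → ℝ}

lemma prob_le_prob_overflow_add (hK : 1 < K) (hα : 0 ≤ α)
    (hroot : ∑ u, K ^ (-(α * c u)) = 1) {E : Type*} {P : E → ℝ} (hP0 : ∀ x, 0 ≤ P x)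
    (hPs : Summable P) {φ : E → List U} (hφ : IsPrefixCode φ) (r b : ℝ) {S : Set E}
    (hS : ∀ x ∈ S, b < logb K (P x)⁻¹) :
    prob P S ≤ prob P {x | r < strCost c (φ x)} + K ^ (α * r - b) := by
  classical
  have hK0 : 0 < K := zero_lt_one.trans hK
  set q : U → ℝ := fun u => K ^ (-(α * c u))
  have hq : ∀ u, 0 < q u := fun u => rpow_pos_of_pos hK0 _
  have hw := hφ.summable_strWeight hq hroot
  set T := {x | r < strCost c (φ x)}
  have hpoint : ∀ x ∈ S, P x ≤ T.indicator P x + K ^ (α * r - b) * strWeight q (φ x) := by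
    intro x hx
    by_cases hxT : r < strCost c (φ x)
    · rw [indicator_of_mem (show x ∈ T from hxT)]
      exact le_add_of_nonneg_right (mul_nonneg (by positivity) (strWeight_pos hq _).le)
    rw [indicator_of_notMem (show x ∉ T from hxT), zero_add, strWeight_rpow_eq hK0, ← rpow_add hK0]
    refine (le_rpow_neg_of_lt_logb_inv hK (hP0 x) (hS x hx)).trans
      (rpow_le_rpow_of_exponent_le hK.le ?_)
    nlinarith [not_lt.1 hxT]
  calc prob P S
      ≤ ∑' x, (T.indicator P x + K ^ (α * r - b) * strWeight q (φ x)) :=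
        prob_le_tsum hP0 (fun x => add_nonneg (indicator_nonneg (fun y _ => hP0 y) x)
          (mul_nonneg (by positivity) (strWeight_pos hq _).le))
          ((hPs.indicator T).add (hw.mul_left _)) hpoint
    _ = prob P T + K ^ (α * r - b) * ∑' x, strWeight q (φ x) := by
        rw [(hPs.indicator T).tsum_add (hw.mul_left _), tsum_mul_left]
        rfl
    _ ≤ prob P T + K ^ (α * r - b) := by
        gcongr
        exact mul_le_of_le_one_right (by positivity) (hφ.tsum_strWeight_le_one hq hroot)

variable {𝒳 : ℕ → Type*} {P : ∀ n, 𝒳 n → ℝ}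

lemma tendsto_prob_info_of_limsup_overflow (hK : 1 < K) (hα : 0 ≤ α)
    (hroot : ∑ u, K ^ (-(α * c u)) = 1) (hP0 : ∀ n x, 0 ≤ P n x) (hP1 : ∀ n, HasSum (P n) 1)
    {φ : ∀ n, 𝒳 n → List U} (hφ : ∀ n, IsPrefixCode (φ n)) {R β : ℝ}
    (hR : limsup (fun n => prob (P n) {x | (n : ℝ) * R < strCost c (φ n x)}) atTop ≤ 0)
    (hβ : α * R < β) :
    Tendsto (fun n => prob (P n) {x | β < (1 / (n : ℝ)) * logb K (P n x)⁻¹}) atTop (𝓝 0) := by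
  have hover := tendsto_zero_of_limsup_nonpos (fun n => prob_nonneg (hP0 n) _)
    (fun n => prob_le_one (hP0 n) (hP1 n) _) hR
  have hgeo : Tendsto (fun n : ℕ => (K ^ (α * R - β)) ^ n) atTop (𝓝 0) :=
    tendsto_pow_atTop_nhds_zero_of_lt_one (by positivity)
      (rpow_lt_one_of_one_lt_of_neg hK (by linarith))
  refine squeeze_zero' (Eventually.of_forall fun n => prob_nonneg (hP0 n) _) ?_
    (by simpa using hover.add hgeo)
  filter_upwards [eventually_gt_atTop 0] with n hn
  have hn' : (0 : ℝ) < n := Nat.cast_pos.2 hn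
  refine (prob_le_prob_overflow_add hK hα hroot (hP0 n) (hP1 n).summable (hφ n) (n * R) (n * β)
    fun x hx => (lt_inv_mul_iff₀ hn').1 (one_div (n : ℝ) ▸ hx)).trans_eq ?_
  rw [← rpow_natCast, ← rpow_mul (zero_lt_one.trans hK).le]
  ring_nf

lemma exists_prefixCode_tendsto_prob_overflow (hK : 1 < K) (hα : 0 < α) (hc : ∀ u, 0 < c u)
    (hroot : ∑ u, K ^ (-(α * c u)) = 1) [∀ n, Countable (𝒳 n)] (hP0 : ∀ n x, 0 ≤ P n x)
    (hP1 : ∀ n, HasSum (P n) 1) {β R : ℝ}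
    (hβ : Tendsto (fun n => prob (P n) {x | β < (1 / (n : ℝ)) * logb K (P n x)⁻¹}) atTop (𝓝 0))
    (hβR : β < α * R) :
    ∃ φ : ∀ n, 𝒳 n → List U, (∀ n, IsPrefixCode (φ n)) ∧ (∀ n x, φ n x ≠ []) ∧
      Tendsto (fun n => prob (P n) {x | (n : ℝ) * R < strCost c (φ n x)}) atTop (𝓝 0) := by
  classical
  have hK0 : 0 < K := zero_lt_one.trans hK
  set q : U → ℝ := fun u => K ^ (-(α * c u))
  have hq : ∀ u, 0 < q u := fun u => rpow_pos_of_pos hK0 _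
  have : Nonempty U := by
    by_contra h
    simp [not_nonempty_iff.1 h] at hroot
  obtain ⟨umin, humin⟩ := Finite.exists_min q
  obtain ⟨umax, humax⟩ := Finite.exists_max q
  have hθ1 : q umax < 1 := rpow_lt_one_of_one_lt_of_neg hK (by nlinarith [hc umax])
  choose φ hφ hnil hw using fun n =>
    exists_prefixCode_strWeight_ge hq hroot (hq umin).le humin humax hθ1 (hP0 n) (hP1 n)
  refine ⟨φ, hφ, hnil, squeeze_zero' (Eventually.of_forall fun n => prob_nonneg (hP0 n) _) ?_ hβ⟩
  set C := logb K (q umin / 4)⁻¹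
  have hcost : ∀ n x, 0 < P n x → α * strCost c (φ n x) ≤ C + logb K (P n x)⁻¹ :=
    fun n x hx => le_logb_inv_add_logb_inv hK (by positivity [hq umin]) hx
      (by rw [← strWeight_rpow_eq hK0]; linarith [hw n x])
  have hlarge : ∀ᶠ n : ℕ in atTop, C ≤ n * (α * R - β) :=
    (tendsto_natCast_atTop_atTop.atTop_mul_const (by linarith)).eventually_ge_atTop C
  filter_upwards [hlarge, eventually_gt_atTop 0] with n hn hn0
  refine prob_le_prob_of_pos (hP0 n) (hP1 n).summable fun x hx hPx => ?_
  show β < 1 / (n : ℝ) * _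
  rw [one_div, lt_inv_mul_iff₀ (Nat.cast_pos.2 hn0)]
  have := mul_lt_mul_of_pos_left (show (n : ℝ) * R < _ from hx) hα
  linarith [hcost n x hPx]

lemma nonneg_of_tendsto_prob_info (hK : 1 < K) (hP0 : ∀ n x, 0 ≤ P n x)
    (hP1 : ∀ n, HasSum (P n) 1) {β : ℝ}
    (hβ : Tendsto (fun n => prob (P n) {x | β < (1 / (n : ℝ)) * logb K (P n x)⁻¹}) atTop (𝓝 0)) :
    0 ≤ β := by
  by_contra! hβ0
  have hone : ∀ n, prob (P n) {x | β < (1 / (n : ℝ)) * logb K (P n x)⁻¹} = 1 := fun n => by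
    convert prob_univ (hP1 n)
    refine eq_univ_of_forall fun x => hβ0.trans_le (mul_nonneg (by positivity) ?_)
    rw [logb_inv, neg_nonneg]
    exact logb_nonpos hK (hP0 n x) (le_hasSum (hP1 n) x fun y _ => hP0 n y)
  simp only [hone] at hβ
  exact one_ne_zero (tendsto_nhds_unique tendsto_const_nhds hβ)

end Source

lemma csInf_eq_csInf_div {A B : Set ℝ} {α : ℝ} (hα : 0 < α) (hA : ∀ R ∈ A, 0 ≤ R)
    (hB : ∀ β ∈ B, 0 ≤ β) (hAB : ∀ R ∈ A, ∀ β, α * R < β → β ∈ B)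
    (hBA : ∀ β ∈ B, ∀ R, 0 < R → β < α * R → R ∈ A) : sInf A = sInf B / α := by
  rcases B.eq_empty_or_nonempty with rfl | hBne
  · have : A = ∅ := eq_empty_of_forall_notMem fun R hR => hAB R hR _ (lt_add_one _)
    simp [this]
  have hmem : ∀ ε > 0, sInf B / α + ε ∈ A := fun ε hε => by
    obtain ⟨β, hβB, hβ⟩ :=
      exists_lt_of_csInf_lt hBne (lt_add_of_pos_right (sInf B) (mul_pos hα hε))
    refine hBA β hβB _ (add_pos_of_nonneg_of_pos (div_nonneg (le_csInf hBne hB) hα.le) hε) ?_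
    rwa [mul_add, mul_div_cancel₀ _ hα.ne']
  refine le_antisymm (le_of_forall_pos_le_add fun ε hε => csInf_le ⟨0, hA⟩ (hmem ε hε))
    (le_csInf ⟨_, hmem 1 one_pos⟩ fun R hR => ?_)
  rw [div_le_iff₀ hα]
  exact le_of_forall_pos_le_add fun ε hε =>
    csInf_le ⟨0, hB⟩ (hAB R hR _ (by linarith))

theorem zero_achievable_overflow_threshold_general {U : Type*} [Fintype U] (K : ℕ) (hK : 2 ≤ K)
    (c : U → ℝ) (hc : ∀ u, 0 < c u)
    (α : ℝ) (hα : 0 < α) (hroot : ∑ u : U, (K : ℝ) ^ (-(α * c u)) = 1)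
    (𝒳 : ℕ → Type) [∀ n, Countable (𝒳 n)]
    (P : ∀ n, 𝒳 n → ℝ) (hP0 : ∀ n x, 0 ≤ P n x) (hP1 : ∀ n, HasSum (P n) 1) :
    sInf {R : ℝ | 0 < R ∧ ∃ φ : ∀ n, 𝒳 n → List U,
        (∀ n, Function.Injective (φ n)) ∧ (∀ n x, φ n x ≠ []) ∧
        (∀ n x y, φ n x <+: φ n y → φ n x = φ n y) ∧
        Filter.limsup (fun n => prob (P n) {x | (n : ℝ) * R < strCost c (φ n x)})
          Filter.atTop ≤ 0}
      = (1 / α) *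
        sInf {β : ℝ |
          Filter.Tendsto
            (fun n => prob (P n) {x | β < (1 / (n : ℝ)) * Real.logb K (P n x)⁻¹})
            Filter.atTop (nhds 0)} := by
  have hK1 : (1 : ℝ) < K := by exact_mod_cast hK
  rw [one_div_mul_eq_div]
  refine csInf_eq_csInf_div hα (fun R hR => hR.1.le)
    (fun β hβ => nonneg_of_tendsto_prob_info hK1 hP0 hP1 hβ) ?_ ?_
  · rintro R ⟨-, φ, hinj, -, hpre, hR⟩ β hβ
    exact tendsto_prob_info_of_limsup_overflow hK1 hα.le hroot hP0 hP1
      (fun n x y h => hinj n (hpre n x y h)) hR hβ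
  · intro β hβ R hR hβR
    obtain ⟨φ, hφ, hnil, hover⟩ :=
      exists_prefixCode_tendsto_prob_overflow hK1 hα hc hroot hP0 hP1 hβ hβR
    exact ⟨hR, φ, fun n => (hφ n).injective, hnil,
      fun n x y h => congrArg (φ n) (hφ n x y h), hover.limsup_eq.le⟩

/-- `R(0|X) = H̄(X)/α_c`, where `H̄(X)` is the spectral sup-entropy rate. -/
theorem zero_achievable_overflow_threshold {U : Type*} [Fintype U] (K : ℕ) (hK : 2 ≤ K)
    (hcard : Fintype.card U = K) (c : U → ℝ) (hc : ∀ u, 0 < c u)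
    (α : ℝ) (hα : 0 < α) (hroot : ∑ u : U, (K : ℝ) ^ (-(α * c u)) = 1)
    (𝒳 : ℕ → Type) [∀ n, Countable (𝒳 n)]
    (P : ∀ n, 𝒳 n → ℝ) (hP0 : ∀ n x, 0 ≤ P n x) (hP1 : ∀ n, HasSum (P n) 1) :
    sInf {R : ℝ | 0 < R ∧ ∃ φ : ∀ n, 𝒳 n → List U,
        (∀ n, Function.Injective (φ n)) ∧ (∀ n x, φ n x ≠ []) ∧
        (∀ n x y, φ n x <+: φ n y → φ n x = φ n y) ∧
        Filter.limsup (fun n => prob (P n) {x | (n : ℝ) * R < strCost c (φ n x)})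
          Filter.atTop ≤ 0}
      = (1 / α) *
        sInf {β : ℝ |
          Filter.Tendsto
            (fun n => prob (P n) {x | β < (1 / (n : ℝ)) * Real.logb K (P n x)⁻¹})
            Filter.atTop (nhds 0)} :=
  zero_achievable_overflow_threshold_general K hK c hc α hα hroot 𝒳 P hP0 hP1
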